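/- For all i ∈ {0,1,2} and n ≥ 1, if ĝ : ℝ^n → ℂ satisfies |ĝ(ω)| ≤ ρ/(1 + (2π‖ω‖₂)^{n+3}) almost everywhere, then ∫_{ℝ^n} |ĝ(ω)| · ‖2πω‖₂^i dω ≤ (2 A_{n-1}/(2π)^n) · ρ, where A_{n-1} = 2π^{n/2}/Γ(n/2). -/

import Mathlib

open MeasureTheory Real

/-- `A_{n-1} = 2π^{n/2}/Γ(n/2)`, the surface area of `S^{n-1}`. -/
noncomputable def Aconst (n : ℕ) : ℝ :=
  2 * π ^ ((n : ℝ) / 2) / Real.Gamma ((n : ℝ) / 2)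

open Set Metric Module
open scoped ENNReal

/-!
In polar coordinates, and after the substitution `s = 2π‖ω‖`, the integral is at most
`A_{n-1} ρ / (2π)^n · ∫_0^∞ s^(n-1+i) / (1 + s^(n+3)) ds`. Since `i ≤ 2`, the last integrand is
at most `1` on `(0, 1]` and at most `s^(-2)` on `(1, ∞)`, so the integral is at most `2`.
-/

lemma lintegral_comp_smul_addHaar {E : Type*} [NormedAddCommGroup E] [NormedSpace ℝ E]
    [MeasurableSpace E] [BorelSpace E] [FiniteDimensional ℝ E]
    (μ : Measure E) [μ.IsAddHaarMeasure] (f : E → ℝ≥0∞) {r : ℝ} (hr : r ≠ 0) :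
    ∫⁻ x, f (r • x) ∂μ = ENNReal.ofReal |(r ^ finrank ℝ E)⁻¹| * ∫⁻ x, f x ∂μ := by
  rw [← smul_eq_mul, ← lintegral_smul_measure, ← Measure.map_addHaar_smul μ hr]
  exact (lintegral_map_equiv f (MeasurableEquiv.smul₀ r hr)).symm

lemma lintegral_fun_norm_addHaar {E : Type*} [NormedAddCommGroup E] [NormedSpace ℝ E]
    [MeasurableSpace E] [BorelSpace E] [Nontrivial E] [FiniteDimensional ℝ E]
    (μ : Measure E) [μ.IsAddHaarMeasure] {f : ℝ → ℝ≥0∞} (hf : Measurable f) :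
    ∫⁻ x, f ‖x‖ ∂μ = finrank ℝ E * μ (ball 0 1) *
      ∫⁻ r in Ioi (0 : ℝ), ENNReal.ofReal (r ^ (finrank ℝ E - 1)) * f r := by
  have hf_snd : Measurable fun p : sphere (0 : E) 1 × Ioi (0 : ℝ) => f p.2 :=
    hf.comp (measurable_subtype_coe.comp measurable_snd)
  calc ∫⁻ x, f ‖x‖ ∂μ = ∫⁻ x : ({0}ᶜ : Set E), f ‖x.1‖ ∂(μ.comap (↑)) := by
        rw [lintegral_subtype_comap (measurableSet_singleton 0).compl fun x => f ‖x‖,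
          restrict_compl_singleton]
    _ = ∫⁻ p : sphere (0 : E) 1 × Ioi (0 : ℝ), f p.2
          ∂(μ.toSphere.prod (.volumeIoiPow (finrank ℝ E - 1))) := by
        simpa [homeomorphUnitSphereProd_apply_snd_coe] using
          μ.measurePreserving_homeomorphUnitSphereProd.lintegral_comp hf_snd
    _ = μ.toSphere univ * ∫⁻ r : Ioi (0 : ℝ), f r ∂(.volumeIoiPow (finrank ℝ E - 1)) := by
        rw [lintegral_prod _ hf_snd.aemeasurable]
        simp [lintegral_const, mul_comm]
    _ = _ := by
        rw [Measure.toSphere_apply_univ, Measure.volumeIoiPow,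
          lintegral_withDensity_eq_lintegral_mul _
            (by exact (measurable_subtype_coe.pow_const _).ennreal_ofReal)
            (by exact hf.comp measurable_subtype_coe)]
        congr 1
        exact lintegral_subtype_comap measurableSet_Ioi
          fun r => ENNReal.ofReal (r ^ (finrank ℝ E - 1)) * f r

lemma natCast_mul_volume_ball_zero_one (n : ℕ) :
    (n : ℝ≥0∞) * volume (ball (0 : EuclideanSpace ℝ (Fin n)) 1) = ENNReal.ofReal (Aconst n) := by
  rcases n.eq_zero_or_pos with rfl | hn
  · simp [Aconst]
  have : Nonempty (Fin n) := ⟨⟨0, hn⟩⟩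
  rw [EuclideanSpace.volume_ball, Fintype.card_fin, ENNReal.ofReal_one, one_pow, one_mul,
    ← ENNReal.ofReal_natCast, ← ENNReal.ofReal_mul n.cast_nonneg, Aconst,
    Real.Gamma_add_one (by positivity), Real.sqrt_eq_rpow, ← Real.rpow_mul_natCast pi_pos.le]
  congr 1
  field_simp

lemma lintegral_Ioi_pow_div_one_add_pow_le_two {a b : ℕ} (hab : a + 2 ≤ b) :
    ∫⁻ r in Ioi (0 : ℝ), ENNReal.ofReal (r ^ a / (1 + r ^ b)) ≤ 2 := by
  have hnear : ∫⁻ r in Ioc (0 : ℝ) 1, ENNReal.ofReal (r ^ a / (1 + r ^ b)) ≤ 1 := by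
    calc ∫⁻ r in Ioc (0 : ℝ) 1, ENNReal.ofReal (r ^ a / (1 + r ^ b))
        ≤ ∫⁻ _ in Ioc (0 : ℝ) 1, 1 := by
          refine setLIntegral_mono (by fun_prop) fun r hr => ?_
          rw [ENNReal.ofReal_le_one]
          exact (div_le_self (by positivity [hr.1.le]) (by linarith [pow_nonneg hr.1.le b])).trans
            (pow_le_one₀ hr.1.le hr.2)
      _ = 1 := by simp
  have hfar : ∫⁻ r in Ioi (1 : ℝ), ENNReal.ofReal (r ^ a / (1 + r ^ b)) ≤ 1 := by
    calc ∫⁻ r in Ioi (1 : ℝ), ENNReal.ofReal (r ^ a / (1 + r ^ b))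
        ≤ ∫⁻ r in Ioi (1 : ℝ), ENNReal.ofReal (r ^ (-2 : ℝ)) := by
          refine setLIntegral_mono (by fun_prop) fun r (hr : 1 < r) => ENNReal.ofReal_le_ofReal ?_
          have hr0 : 0 < r := one_pos.trans hr
          rw [Real.rpow_neg hr0.le, Real.rpow_two, div_le_iff₀ (by positivity), ← div_eq_inv_mul,
            le_div_iff₀ (by positivity), ← pow_add]
          linarith [pow_le_pow_right₀ hr.le hab]
      _ = 1 := by
          rw [← ofReal_integral_eq_lintegral_ofReal (integrableOn_Ioi_rpow_of_lt (by norm_num)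
            one_pos), integral_Ioi_rpow_of_lt (by norm_num) one_pos]
          · norm_num
          · filter_upwards [ae_restrict_mem measurableSet_Ioi] with r (hr : 1 < r)
            positivity
  calc ∫⁻ r in Ioi (0 : ℝ), ENNReal.ofReal (r ^ a / (1 + r ^ b))
      = (∫⁻ r in Ioc (0 : ℝ) 1, ENNReal.ofReal (r ^ a / (1 + r ^ b)))
        + ∫⁻ r in Ioi (1 : ℝ), ENNReal.ofReal (r ^ a / (1 + r ^ b)) := by
        rw [← Ioc_union_Ioi_eq_Ioi zero_le_one,
          lintegral_union measurableSet_Ioi (Ioc_disjoint_Ioi le_rfl)]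
    _ ≤ 1 + 1 := add_le_add hnear hfar
    _ = 2 := one_add_one_eq_two

/-- If `|ĝ(ω)| ≤ ρ/(1 + (2π‖ω‖₂)^{n+3})` a.e., then for `i ∈ {0,1,2}`,
`∫_{ℝⁿ} |ĝ(ω)| ‖2πω‖₂^i dω ≤ (2 A_{n-1}/(2π)^n) ρ`. -/
theorem stmt12 {n : ℕ} (hn : 1 ≤ n) (i : ℕ) (hi : i ≤ 2) (ρ : ℝ)
    (g : EuclideanSpace ℝ (Fin n) → ℂ)
    (hg : ∀ᵐ ω : EuclideanSpace ℝ (Fin n) ∂volume,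
      ‖g ω‖ ≤ ρ / (1 + (2 * π * ‖ω‖) ^ (n + 3))) :
    (∫⁻ ω : EuclideanSpace ℝ (Fin n), ENNReal.ofReal (‖g ω‖ * (2 * π * ‖ω‖) ^ i) ∂volume)
      ≤ ENNReal.ofReal (2 * Aconst n / (2 * π) ^ n * ρ) := by
  have : Nonempty (Fin n) := ⟨⟨0, hn⟩⟩
  set k : ℝ → ℝ≥0∞ := fun s => ENNReal.ofReal (s ^ i / (1 + s ^ (n + 3)))
  have hk : Measurable k := by fun_prop
  have h2π : 0 < 2 * π := by positivity
  have hA : 0 ≤ Aconst n := by unfold Aconst; positivity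
  have hradial : ∫⁻ r in Ioi (0 : ℝ), ENNReal.ofReal (r ^ (n - 1)) * k r ≤ 2 := by
    refine le_of_eq_of_le (setLIntegral_congr_fun measurableSet_Ioi fun r (hr : 0 < r) => ?_)
      (lintegral_Ioi_pow_div_one_add_pow_le_two (a := n - 1 + i) (b := n + 3) (by omega))
    rw [← ENNReal.ofReal_mul (by positivity), pow_add r (n - 1) i, mul_div_assoc']
  calc (∫⁻ ω : EuclideanSpace ℝ (Fin n), ENNReal.ofReal (‖g ω‖ * (2 * π * ‖ω‖) ^ i) ∂volume)
      ≤ ∫⁻ ω : EuclideanSpace ℝ (Fin n), ENNReal.ofReal ρ * k ‖(2 * π) • ω‖ := by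
        refine lintegral_mono_ae (hg.mono fun ω hω => ?_)
        rw [norm_smul, norm_of_nonneg h2π.le, ← ENNReal.ofReal_mul' (by positivity)]
        refine ENNReal.ofReal_le_ofReal ?_
        calc ‖g ω‖ * (2 * π * ‖ω‖) ^ i
            ≤ ρ / (1 + (2 * π * ‖ω‖) ^ (n + 3)) * (2 * π * ‖ω‖) ^ i := by gcongr
          _ = _ := by ring
    _ = ENNReal.ofReal ρ * (ENNReal.ofReal ((2 * π) ^ n)⁻¹ * (ENNReal.ofReal (Aconst n) *
          ∫⁻ r in Ioi (0 : ℝ), ENNReal.ofReal (r ^ (n - 1)) * k r)) := by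
        rw [lintegral_const_mul _ (by fun_prop),
          lintegral_comp_smul_addHaar _ (fun ω => k ‖ω‖) h2π.ne', lintegral_fun_norm_addHaar _ hk,
          finrank_euclideanSpace_fin, natCast_mul_volume_ball_zero_one,
          abs_of_pos (by positivity)]
    _ ≤ ENNReal.ofReal ρ * (ENNReal.ofReal ((2 * π) ^ n)⁻¹ * (ENNReal.ofReal (Aconst n) * 2)) := by
        gcongr
    _ = ENNReal.ofReal (2 * Aconst n / (2 * π) ^ n * ρ) := by
        rw [← ENNReal.ofReal_ofNat 2, ← ENNReal.ofReal_mul hA, ← ENNReal.ofReal_mul (by positivity),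
          ← ENNReal.ofReal_mul' (by positivity)]
        congr 1
        ring
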